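/- Let X = l^p_a(α), α ≥ 1, 1 ≤ p ≤ ∞. Then there is a constant c > 0 such that for all r ∈ [0,1), C_{n,r}(X, H^∞) ≥ c (1/(1−r))^{α − 1/p}. -/

import Mathlib

open Complex Metric ComplexConjugate

noncomputable section

/-- Predicate: `f` is holomorphic on the unit disc. -/
def HolOn (f : ℂ → ℂ) : Prop := AnalyticOn ℂ f (Metric.ball 0 1)

/-- `k`-th Taylor coefficient of `f` at the origin. -/
def coef (f : ℂ → ℂ) (k : ℕ) : ℂ := iteratedDeriv k f 0 / (Nat.factorial k)

/-- Hardy space `H²` norm via Taylor coefficients. -/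
def H2norm (f : ℂ → ℂ) : ℝ := Real.sqrt (∑' k : ℕ, ‖coef f k‖ ^ 2)

def MemH2 (f : ℂ → ℂ) : Prop := HolOn f ∧ Summable (fun k : ℕ => ‖coef f k‖ ^ 2)

def Hinfnorm (f : ℂ → ℂ) : ℝ := sSup ((fun z => ‖f z‖) '' Metric.ball (0:ℂ) 1)

def MemHinf (f : ℂ → ℂ) : Prop := HolOn f ∧ BddAbove ((fun z => ‖f z‖) '' Metric.ball (0:ℂ) 1)

/-- Elementary Blaschke factor. -/
def blaschke (l z : ℂ) : ℂ := (l - z) / (1 - conj l * z)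

def BlaschkeProd {n : ℕ} (l : Fin n → ℂ) (z : ℂ) : ℂ := ∏ i, blaschke (l i) z

/-- `g` agrees with `f` on the finite sequence `l` (with multiplicities). -/
def AgreeOn {n : ℕ} (l : Fin n → ℂ) (f g : ℂ → ℂ) : Prop :=
  ∃ h : ℂ → ℂ, HolOn h ∧ ∀ z ∈ Metric.ball (0:ℂ) 1, f z - g z = BlaschkeProd l z * h z

/-- Interpolation constant `c(σ, H², H^∞)`. -/
def cH2Hinf {n : ℕ} (l : Fin n → ℂ) : ℝ :=
  sSup { c | ∃ f, MemH2 f ∧ H2norm f ≤ 1 ∧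
    c = sInf { m | ∃ g, MemHinf g ∧ Hinfnorm g = m ∧ AgreeOn l f g } }

/-- `C_{n,r}(H², H^∞)`. -/
def CnrH2Hinf (n : ℕ) (r : ℝ) : ℝ :=
  sSup { c | ∃ m, m ≤ n ∧ ∃ l : Fin m → ℂ, (∀ i, ‖l i‖ ≤ r) ∧ c = cH2Hinf l }

/-- Cauchy sesquilinear pairing. -/
def cauchyPairing (f g : ℂ → ℂ) : ℂ := ∑' k : ℕ, coef f k * conj (coef g k)

/-- Membership in the model space `K_B = H² ⊖ B H²`. -/
def MemKB {n : ℕ} (l : Fin n → ℂ) (g : ℂ → ℂ) : Prop :=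
  MemH2 g ∧ ∀ h, MemH2 h → cauchyPairing g (fun z => BlaschkeProd l z * h z) = 0

/-- Weighted space `l^p_a(α)` norm: `‖f‖^p = Σ |f̂(k)|^p/(k+1)^{p(α-1)}`. -/
def lpaNorm (p α : ℝ) (f : ℂ → ℂ) : ℝ :=
  (∑' k : ℕ, ‖coef f k‖ ^ p / ((k : ℝ) + 1) ^ (p * (α - 1))) ^ (1 / p)

def MemLpa (p α : ℝ) (f : ℂ → ℂ) : Prop :=
  HolOn f ∧ Summable (fun k : ℕ => ‖coef f k‖ ^ p / ((k : ℝ) + 1) ^ (p * (α - 1)))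

/-- Weighted space `l^∞_a(α)` norm (case `p = ∞`). -/
def linfaNorm (α : ℝ) (f : ℂ → ℂ) : ℝ :=
  ⨆ k : ℕ, ‖coef f k‖ / ((k : ℝ) + 1) ^ (α - 1)

def MemLinfa (α : ℝ) (f : ℂ → ℂ) : Prop :=
  HolOn f ∧ BddAbove (Set.range fun k : ℕ => ‖coef f k‖ / ((k : ℝ) + 1) ^ (α - 1))

/-- `C_{n,r}(l^p_a(α), H^∞)`. -/
def CnrLpaHinf (p α : ℝ) (n : ℕ) (r : ℝ) : ℝ :=
  sSup { c | ∃ m, m ≤ n ∧ ∃ l : Fin m → ℂ, (∀ i, ‖l i‖ ≤ r) ∧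
    c = sSup { c' | ∃ f, MemLpa p α f ∧ lpaNorm p α f ≤ 1 ∧
      c' = sInf { y | ∃ g, MemHinf g ∧ Hinfnorm g = y ∧ AgreeOn l f g } } }

/-- `C_{n,r}(l^∞_a(α), H^∞)`. -/
def CnrLinfaHinf (α : ℝ) (n : ℕ) (r : ℝ) : ℝ :=
  sSup { c | ∃ m, m ≤ n ∧ ∃ l : Fin m → ℂ, (∀ i, ‖l i‖ ≤ r) ∧
    c = sSup { c' | ∃ f, MemLinfa α f ∧ linfaNorm α f ≤ 1 ∧
      c' = sInf { y | ∃ g, MemHinf g ∧ Hinfnorm g = y ∧ AgreeOn l f g } } }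

/-! A single node already gives the bound. If `g ∈ H^∞` interpolates `f` at the node `r`, then
`g(r) = f(r)`, so `‖g‖_∞ ≥ |f(r)|`. Take `N = ⌊1/(1-r)⌋` and
`f = N^{-1/p} ∑_{k<N} (k+1)^{α-1} z^k`. It lies in the unit ball of `l^p_a(α)`, and since
`r^k ≥ e^{-1}` for `k < N`, `f(r) ≥ e^{-1} N^{-1/p} ∑_{k<N} (k+1)^{α-1} ≳ N^{α-1/p}`, and
`N ≍ (1-r)^{-1}`.

Since `sSup` of a set of reals that is not bounded above is `0`, the suprema defining `C_{n,r}`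
must also be shown bounded. The unit ball is uniformly bounded on every disc of radius `< 1`, and
Newton interpolation by iterated divided differences (`dslope`), controlled by the maximum modulus
principle, gives interpolants on at most `n` nodes of modulus `≤ r` whose `H^∞` norms are bounded
uniformly. -/

open scoped Polynomial

theorem holOn_iff_differentiableOn {f : ℂ → ℂ} : HolOn f ↔ DifferentiableOn ℂ f (ball 0 1) :=
  Complex.analyticOn_iff_differentiableOn isOpen_ball

theorem HolOn.hasSum_coef {f : ℂ → ℂ} (hf : HolOn f) {z : ℂ} (hz : z ∈ ball (0 : ℂ) 1) :
    HasSum (fun k => coef f k * z ^ k) (f z) := by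
  have hterm : (fun k => coef f k * z ^ k) =
      fun k => (k.factorial : ℂ)⁻¹ • (z - 0) ^ k • iteratedDeriv k f 0 := funext fun k => by
    rw [coef, sub_zero, smul_eq_mul, smul_eq_mul]
    ring
  rw [hterm]
  exact Complex.hasSum_taylorSeries_on_ball (holOn_iff_differentiableOn.1 hf) hz

theorem HolOn.norm_le_tsum_of_norm_coef_le {f : ℂ → ℂ} (hf : HolOn f) {w : ℕ → ℝ}
    (hw : ∀ k, ‖coef f k‖ ≤ w k) {ρ : ℝ} (hρ : ρ < 1) (hsum : Summable fun k => w k * ρ ^ k)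
    {z : ℂ} (hz : z ∈ closedBall (0 : ℂ) ρ) : ‖f z‖ ≤ ∑' k, w k * ρ ^ k := by
  rw [mem_closedBall_zero_iff] at hz
  rw [← (hf.hasSum_coef (mem_ball_zero_iff.2 (hz.trans_lt hρ))).tsum_eq]
  refine tsum_of_norm_bounded hsum.hasSum fun k => ?_
  rw [norm_mul, norm_pow]
  exact mul_le_mul (hw k) (pow_le_pow_left₀ (norm_nonneg z) hz k) (by positivity)
    ((norm_nonneg _).trans (hw k))

theorem summable_rpow_mul_geometric (s : ℝ) {ρ : ℝ} (hρ0 : 0 ≤ ρ) (hρ1 : ρ < 1) :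
    Summable fun k : ℕ => ((k : ℝ) + 1) ^ s * ρ ^ k := by
  set m := ⌈s⌉₊
  have hu : (fun k : ℕ => (((k + 1) ^ m : ℕ) : ℝ)) =O[Filter.atTop]
      fun k => ((k ^ m : ℕ) : ℝ) := by
    refine Asymptotics.IsBigO.of_bound (2 ^ m) ?_
    filter_upwards [Filter.eventually_ge_atTop 1] with k hk
    have hk' : (k : ℝ) + 1 ≤ 2 * k := by
      have : (1 : ℝ) ≤ k := by exact_mod_cast hk
      linarith
    simp only [Nat.cast_pow, Nat.cast_add, Nat.cast_one, norm_pow, Real.norm_eq_abs,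
      Nat.abs_cast, abs_of_nonneg (by positivity : (0 : ℝ) ≤ k + 1)]
    rw [← mul_pow]
    exact pow_le_pow_left₀ (by positivity) hk' m
  refine (summable_norm_mul_geometric_of_norm_lt_one (R := ℝ)
    (by rwa [Real.norm_eq_abs, abs_of_nonneg hρ0]) hu).of_nonneg_of_le (fun k => by positivity)
    fun k => ?_
  rw [norm_mul, norm_pow, Real.norm_eq_abs, Real.norm_eq_abs, abs_of_nonneg hρ0,
    abs_of_nonneg (by positivity)]
  push_cast
  rw [← Real.rpow_natCast ((k : ℝ) + 1) m]
  exact mul_le_mul_of_nonneg_right (Real.rpow_le_rpow_of_exponent_le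
    (le_add_of_nonneg_left k.cast_nonneg) (Nat.le_ceil s)) (by positivity)

theorem sub_eq_blaschke_mul {a z : ℂ} (h : conj a * z ≠ 1) :
    z - a = blaschke a z * (conj a * z - 1) := by
  rw [blaschke, div_mul_eq_mul_div, eq_div_iff (sub_ne_zero.2 h.symm)]
  ring

theorem agreeOn_of_sub_eq_prod_mul {m : ℕ} {l : Fin m → ℂ} (hl : ∀ i, ‖l i‖ ≤ 1)
    {f g h : ℂ → ℂ} (hh : HolOn h)
    (hfg : ∀ z ∈ ball (0 : ℂ) 1, f z - g z = (∏ i, (z - l i)) * h z) : AgreeOn l f g := by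
  refine ⟨fun z => (∏ i, (conj (l i) * z - 1)) * h z, ?_, fun z hz => ?_⟩
  · refine holOn_iff_differentiableOn.2 (DifferentiableOn.mul ?_ (holOn_iff_differentiableOn.1 hh))
    exact DifferentiableOn.fun_finsetProd fun i _ =>
      ((differentiableOn_id.const_mul _).sub_const 1)
  · have hne : ∀ i, conj (l i) * z ≠ 1 := fun i h1 => by
      have := congrArg norm h1
      rw [norm_mul, Complex.norm_conj, norm_one] at this
      have hz' := mem_ball_zero_iff.1 hz
      nlinarith [hl i, norm_nonneg z, norm_nonneg (l i)]
    rw [hfg z hz, BlaschkeProd, Finset.prod_congr rfl fun i _ => sub_eq_blaschke_mul (hne i),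
      Finset.prod_mul_distrib]
    ring

theorem norm_dslope_le {F : ℂ → ℂ} {c a : ℂ} {r ρ M : ℝ}
    (hF : DifferentiableOn ℂ F (closedBall c ρ)) (ha : a ∈ closedBall c r) (hrρ : r < ρ)
    (hM : ∀ z ∈ closedBall c ρ, ‖F z‖ ≤ M) {z : ℂ} (hz : z ∈ closedBall c ρ) :
    ‖dslope F a z‖ ≤ 2 * M / (ρ - r) := by
  have hρ : 0 < ρ := dist_nonneg.trans_lt ((mem_closedBall.1 ha).trans_lt hrρ)
  have hd : DifferentiableOn ℂ (dslope F a) (closedBall c ρ) := (Complex.differentiableOn_dslope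
    (closedBall_mem_nhds_of_mem (closedBall_subset_ball hrρ ha))).2 hF
  rw [← closure_ball c hρ.ne'] at hd hz
  refine Complex.norm_le_of_forall_mem_frontier_norm_le isBounded_ball hd.diffContOnCl
    (fun w hw => ?_) hz
  -- maximum modulus: on the circle the difference quotient has denominator `‖w - a‖ ≥ ρ - r`
  rw [frontier_ball c hρ.ne', mem_sphere] at hw
  have hwa : ρ - r ≤ ‖w - a‖ := by
    rw [← dist_eq_norm]
    linarith [dist_triangle w a c, mem_closedBall.1 ha]
  have hw' : w ∈ closedBall c ρ := mem_closedBall.2 hw.le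
  have ha' : a ∈ closedBall c ρ := closedBall_subset_closedBall hrρ.le ha
  rw [dslope_of_ne _ (sub_ne_zero.1 (norm_pos_iff.1 ((sub_pos.2 hrρ).trans_le hwa))),
    slope_def_field, norm_div]
  gcongr
  · linarith [hM a ha', norm_nonneg (F a)]
  · exact (norm_sub_le _ _).trans (by linarith [hM w hw', hM a ha'])

theorem exists_interpolant (m : ℕ) {r ρ : ℝ} (hrρ : r < ρ) (hρ1 : ρ < 1) :
    ∃ K : ℝ, ∀ l : Fin m → ℂ, (∀ i, ‖l i‖ ≤ r) → ∀ (F : ℂ → ℂ) (M : ℝ),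
      DifferentiableOn ℂ F (ball 0 1) → (∀ z ∈ closedBall (0 : ℂ) ρ, ‖F z‖ ≤ M) →
      ∃ g h : ℂ → ℂ, DifferentiableOn ℂ g (ball 0 1) ∧ DifferentiableOn ℂ h (ball 0 1) ∧
        (∀ z, F z - g z = (∏ i, (z - l i)) * h z) ∧ ∀ z ∈ ball (0 : ℂ) 1, ‖g z‖ ≤ K * M := by
  induction m with
  | zero =>
    exact ⟨0, fun l _ F M hF _ =>
      ⟨0, F, differentiableOn_const 0, hF, fun z => by simp, fun z _ => by simp⟩⟩
  | succ m ih =>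
    obtain ⟨K, hK⟩ := ih
    refine ⟨1 + 4 * K / (ρ - r), fun l hl F M hF hM => ?_⟩
    set a := l 0
    have ha : a ∈ closedBall (0 : ℂ) r := mem_closedBall_zero_iff.2 (hl 0)
    have ha1 : a ∈ ball (0 : ℂ) 1 := closedBall_subset_ball (hrρ.trans hρ1) ha
    -- Newton step: interpolate the divided difference `dslope F a` at the remaining nodes
    obtain ⟨g, h, hg, hh, hfac, hgK⟩ := hK (fun i => l i.succ) (fun i => hl i.succ)
      (dslope F a) (2 * M / (ρ - r))
      ((Complex.differentiableOn_dslope (isOpen_ball.mem_nhds ha1)).2 hF)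
      (fun z hz => norm_dslope_le (hF.mono (closedBall_subset_ball hρ1)) ha hrρ hM hz)
    refine ⟨fun z => F a + (z - a) * g z, h, ?_, hh, fun z => ?_, fun z hz => ?_⟩
    · exact (differentiableOn_const _).add ((differentiableOn_id.sub_const a).mul hg)
    · have hslope : F z - F a = (z - a) * dslope F a z := by
        rw [← smul_eq_mul, sub_smul_dslope]
      calc F z - (F a + (z - a) * g z) = (z - a) * (dslope F a z - g z) := by
            rw [mul_sub, ← hslope]; ring
        _ = (∏ i, (z - l i)) * h z := by rw [hfac, Fin.prod_univ_succ]; ring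
    · have hFa : ‖F a‖ ≤ M := hM a (closedBall_subset_closedBall hrρ.le ha)
      have hza : ‖z - a‖ ≤ 2 := (norm_sub_le _ _).trans (by
        linarith [mem_ball_zero_iff.1 hz, mem_closedBall_zero_iff.1 ha])
      calc ‖F a + (z - a) * g z‖ ≤ ‖F a‖ + ‖z - a‖ * ‖g z‖ := by
            rw [← norm_mul]; exact norm_add_le _ _
        _ ≤ M + 2 * (K * (2 * M / (ρ - r))) := by
            linarith [mul_le_mul hza (hgK z hz) (norm_nonneg _) zero_le_two]
        _ = (1 + 4 * K / (ρ - r)) * M := by ring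

theorem memHinf_and_hinfnorm_le {g : ℂ → ℂ} (hg : HolOn g) {K : ℝ}
    (hK : ∀ z ∈ ball (0 : ℂ) 1, ‖g z‖ ≤ K) : MemHinf g ∧ Hinfnorm g ≤ K := by
  have hbound : ∀ y ∈ (fun z => ‖g z‖) '' ball (0 : ℂ) 1, y ≤ K := by
    rintro _ ⟨z, hz, rfl⟩
    exact hK z hz
  exact ⟨⟨hg, K, hbound⟩, csSup_le ((nonempty_ball.2 one_pos).image _) hbound⟩

theorem exists_agreeOn_hinfnorm_le (m : ℕ) {r ρ : ℝ} (hrρ : r < ρ) (hρ1 : ρ < 1) :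
    ∃ K : ℝ, ∀ l : Fin m → ℂ, (∀ i, ‖l i‖ ≤ r) → ∀ (f : ℂ → ℂ) (M : ℝ), HolOn f →
      (∀ z ∈ closedBall (0 : ℂ) ρ, ‖f z‖ ≤ M) →
      ∃ g, MemHinf g ∧ AgreeOn l f g ∧ Hinfnorm g ≤ K * M := by
  obtain ⟨K, hK⟩ := exists_interpolant m hrρ hρ1
  refine ⟨K, fun l hl f M hf hM => ?_⟩
  obtain ⟨g, h, hg, hh, hfac, hgK⟩ := hK l hl f M (holOn_iff_differentiableOn.1 hf) hM
  obtain ⟨hgH, hgK'⟩ := memHinf_and_hinfnorm_le (holOn_iff_differentiableOn.2 hg) hgK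
  exact ⟨g, hgH, agreeOn_of_sub_eq_prod_mul (fun i => (hl i).trans (hrρ.trans hρ1).le)
    (holOn_iff_differentiableOn.2 hh) (fun z _ => hfac z), hgK'⟩

/- For the unit ball `{f | Mem f ∧ Nrm f ≤ 1}` of a space `X`, `interpConst Mem Nrm l` is the
paper's `c(σ, X, H^∞)` and `worstInterpConst Mem Nrm n r` is `C_{n,r}(X, H^∞)`. -/
def minInterpNorm {m : ℕ} (l : Fin m → ℂ) (f : ℂ → ℂ) : ℝ :=
  sInf { y | ∃ g, MemHinf g ∧ Hinfnorm g = y ∧ AgreeOn l f g }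

def interpConst (Mem : (ℂ → ℂ) → Prop) (Nrm : (ℂ → ℂ) → ℝ) {m : ℕ} (l : Fin m → ℂ) : ℝ :=
  sSup { c | ∃ f, Mem f ∧ Nrm f ≤ 1 ∧ c = minInterpNorm l f }

def worstInterpConst (Mem : (ℂ → ℂ) → Prop) (Nrm : (ℂ → ℂ) → ℝ) (n : ℕ) (r : ℝ) : ℝ :=
  sSup { c | ∃ m, m ≤ n ∧ ∃ l : Fin m → ℂ, (∀ i, ‖l i‖ ≤ r) ∧ c = interpConst Mem Nrm l }

theorem cnrLpaHinf_eq (p α : ℝ) (n : ℕ) (r : ℝ) :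
    CnrLpaHinf p α n r = worstInterpConst (MemLpa p α) (lpaNorm p α) n r := rfl

theorem cnrLinfaHinf_eq (α : ℝ) (n : ℕ) (r : ℝ) :
    CnrLinfaHinf α n r = worstInterpConst (MemLinfa α) (linfaNorm α) n r := rfl

theorem norm_le_hinfnorm {g : ℂ → ℂ} (hg : MemHinf g) {z : ℂ} (hz : z ∈ ball (0 : ℂ) 1) :
    ‖g z‖ ≤ Hinfnorm g :=
  le_csSup hg.2 ⟨z, hz, rfl⟩

theorem AgreeOn.apply_eq {m : ℕ} {l : Fin m → ℂ} {f g : ℂ → ℂ} (hfg : AgreeOn l f g) {z : ℂ}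
    (hz : z ∈ ball (0 : ℂ) 1) (hB : BlaschkeProd l z = 0) : g z = f z := by
  obtain ⟨h, -, hfgh⟩ := hfg
  rw [eq_comm, ← sub_eq_zero, hfgh z hz, hB, zero_mul]

theorem minInterpNorm_le {m : ℕ} {l : Fin m → ℂ} {f g : ℂ → ℂ} (hg : MemHinf g)
    (hfg : AgreeOn l f g) : minInterpNorm l f ≤ Hinfnorm g := by
  refine csInf_le ⟨0, ?_⟩ ⟨g, hg, rfl, hfg⟩
  rintro _ ⟨g', hg', rfl, -⟩
  exact (norm_nonneg _).trans (norm_le_hinfnorm hg' (mem_ball_self one_pos))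

theorem norm_le_minInterpNorm {m : ℕ} {l : Fin m → ℂ} {f : ℂ → ℂ} {z : ℂ}
    (hz : z ∈ ball (0 : ℂ) 1) (hB : BlaschkeProd l z = 0)
    (hex : ∃ g, MemHinf g ∧ AgreeOn l f g) : ‖f z‖ ≤ minInterpNorm l f := by
  obtain ⟨g₀, hg₀, hfg₀⟩ := hex
  refine le_csInf ⟨_, g₀, hg₀, rfl, hfg₀⟩ ?_
  rintro _ ⟨g, hg, rfl, hfg⟩
  rw [← hfg.apply_eq hz hB]
  exact norm_le_hinfnorm hg hz

theorem le_worstInterpConst {Mem : (ℂ → ℂ) → Prop} {Nrm : (ℂ → ℂ) → ℝ} {n : ℕ} {r : ℝ}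
    (hB : ∀ m ≤ n, ∃ B, ∀ l : Fin m → ℂ, (∀ i, ‖l i‖ ≤ r) →
      ∀ f, Mem f → Nrm f ≤ 1 → minInterpNorm l f ≤ B)
    {m₀ : ℕ} (hm₀ : m₀ ≤ n) {l₀ : Fin m₀ → ℂ} (hl₀ : ∀ i, ‖l₀ i‖ ≤ r) {f₀ : ℂ → ℂ}
    (hf₀ : Mem f₀) (hf₀1 : Nrm f₀ ≤ 1) :
    minInterpNorm l₀ f₀ ≤ worstInterpConst Mem Nrm n r := by
  choose B hB using hB
  have hconst : ∀ m (hm : m ≤ n) (l : Fin m → ℂ), (∀ i, ‖l i‖ ≤ r) →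
      ∀ c ∈ { c | ∃ f, Mem f ∧ Nrm f ≤ 1 ∧ c = minInterpNorm l f }, c ≤ B m hm := by
    rintro m hm l hl _ ⟨f, hf, hf1, rfl⟩
    exact hB m hm l hl f hf hf1
  have hbdd_of : ∀ m ∈ Set.Iic n, BddAbove { c | ∃ l : Fin m → ℂ, (∀ i, ‖l i‖ ≤ r) ∧
      c = interpConst Mem Nrm l } := fun m hm => by
    refine ⟨max (B m hm) 0, ?_⟩
    rintro _ ⟨l, hl, rfl⟩
    exact Real.sSup_le (fun c hc => (hconst m hm l hl c hc).trans (le_max_left _ _))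
      (le_max_right _ _)
  have hbdd : BddAbove
      { c | ∃ m, m ≤ n ∧ ∃ l : Fin m → ℂ, (∀ i, ‖l i‖ ≤ r) ∧ c = interpConst Mem Nrm l } := by
    refine ((Set.finite_Iic n).bddAbove_biUnion.2 hbdd_of).mono ?_
    rintro c ⟨m, hm, l, hl, rfl⟩
    exact Set.mem_biUnion (Set.mem_Iic.2 hm) ⟨l, hl, rfl⟩
  calc minInterpNorm l₀ f₀ ≤ interpConst Mem Nrm l₀ :=
        le_csSup ⟨B m₀ hm₀, hconst m₀ hm₀ l₀ hl₀⟩ ⟨f₀, hf₀, hf₀1, rfl⟩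
    _ ≤ worstInterpConst Mem Nrm n r := le_csSup hbdd ⟨m₀, hm₀, l₀, hl₀, rfl⟩

theorem norm_le_worstInterpConst {Mem : (ℂ → ℂ) → Prop} {Nrm : (ℂ → ℂ) → ℝ}
    (hhol : ∀ f, Mem f → Nrm f ≤ 1 → HolOn f)
    (hbdd : ∀ ρ, 0 ≤ ρ → ρ < 1 →
      ∃ M, ∀ f, Mem f → Nrm f ≤ 1 → ∀ z ∈ closedBall (0 : ℂ) ρ, ‖f z‖ ≤ M)
    {n : ℕ} (hn : 1 ≤ n) {r : ℝ} (hr0 : 0 ≤ r) (hr1 : r < 1) {f₀ : ℂ → ℂ}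
    (hf₀ : Mem f₀) (hf₀1 : Nrm f₀ ≤ 1) : ‖f₀ r‖ ≤ worstInterpConst Mem Nrm n r := by
  obtain ⟨M, hM⟩ := hbdd ((1 + r) / 2) (by linarith) (by linarith)
  have hK : ∀ m, ∃ K, ∀ l : Fin m → ℂ, (∀ i, ‖l i‖ ≤ r) → ∀ f, Mem f → Nrm f ≤ 1 →
      ∃ g, MemHinf g ∧ AgreeOn l f g ∧ Hinfnorm g ≤ K * M := fun m => by
    obtain ⟨K, hK⟩ :=
      exists_agreeOn_hinfnorm_le m (r := r) (ρ := (1 + r) / 2) (by linarith) (by linarith)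
    exact ⟨K, fun l hl f hf hf1 => hK l hl f M (hhol f hf hf1) (hM f hf hf1)⟩
  set l₀ : Fin 1 → ℂ := fun _ => (r : ℂ)
  have hl₀ : ∀ i, ‖l₀ i‖ ≤ r := fun _ => by simp [l₀, abs_of_nonneg hr0]
  have hr : (r : ℂ) ∈ ball (0 : ℂ) 1 := by simpa [abs_of_nonneg hr0] using hr1
  have hB : BlaschkeProd l₀ r = 0 := by simp [BlaschkeProd, blaschke, l₀]
  obtain ⟨K₁, hK₁⟩ := hK 1
  obtain ⟨g₀, hg₀, hfg₀, -⟩ := hK₁ l₀ hl₀ f₀ hf₀ hf₀1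
  refine (norm_le_minInterpNorm hr hB ⟨g₀, hg₀, hfg₀⟩).trans
    (le_worstInterpConst (fun m _ => ?_) hn hl₀ hf₀ hf₀1)
  obtain ⟨K, hK⟩ := hK m
  refine ⟨K * M, fun l hl f hf hf1 => ?_⟩
  obtain ⟨g, hg, hfg, hgK⟩ := hK l hl f hf hf1
  exact (minInterpNorm_le hg hfg).trans hgK

theorem norm_le_worstInterpConst_of_norm_coef_le {Mem : (ℂ → ℂ) → Prop}
    {Nrm : (ℂ → ℂ) → ℝ} {s : ℝ}
    (hcoef : ∀ f, Mem f → Nrm f ≤ 1 → HolOn f ∧ ∀ k : ℕ, ‖coef f k‖ ≤ ((k : ℝ) + 1) ^ s)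
    {n : ℕ} (hn : 1 ≤ n) {r : ℝ} (hr0 : 0 ≤ r) (hr1 : r < 1) {f₀ : ℂ → ℂ}
    (hf₀ : Mem f₀) (hf₀1 : Nrm f₀ ≤ 1) : ‖f₀ r‖ ≤ worstInterpConst Mem Nrm n r :=
  norm_le_worstInterpConst (fun f hf hf1 => (hcoef f hf hf1).1)
    (fun _ hρ0 hρ1 => ⟨_, fun f hf hf1 _ hz => (hcoef f hf hf1).1.norm_le_tsum_of_norm_coef_le
      (hcoef f hf hf1).2 hρ1 (summable_rpow_mul_geometric s hρ0 hρ1) hz⟩)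
    hn hr0 hr1 hf₀ hf₀1

theorem norm_coef_le_of_lpaNorm_le_one {p α : ℝ} (hp : 0 < p) {f : ℂ → ℂ} (hf : MemLpa p α f)
    (hf1 : lpaNorm p α f ≤ 1) (k : ℕ) : ‖coef f k‖ ≤ ((k : ℝ) + 1) ^ (α - 1) := by
  have hsum : ∑' j : ℕ, ‖coef f j‖ ^ p / ((j : ℝ) + 1) ^ (p * (α - 1)) ≤ 1 := by
    by_contra! h
    exact (Real.one_lt_rpow h (by positivity)).not_ge hf1
  have hk := (hf.2.le_tsum k fun j _ => by positivity).trans hsum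
  rw [div_le_one (by positivity), mul_comm, Real.rpow_mul (by positivity)] at hk
  exact (Real.rpow_le_rpow_iff (norm_nonneg _) (by positivity) hp).1 hk

theorem norm_coef_le_of_linfaNorm_le_one {α : ℝ} {f : ℂ → ℂ} (hf : MemLinfa α f)
    (hf1 : linfaNorm α f ≤ 1) (k : ℕ) : ‖coef f k‖ ≤ ((k : ℝ) + 1) ^ (α - 1) :=
  (div_le_one (by positivity)).1 ((le_ciSup hf.2 k).trans hf1)

theorem iteratedDeriv_eval (P : ℂ[X]) (k : ℕ) :
    iteratedDeriv k (fun z => P.eval z) = fun z => (Polynomial.derivative^[k] P).eval z := by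
  induction k with
  | zero => simp
  | succ k ih =>
    rw [iteratedDeriv_succ, ih, Function.iterate_succ_apply']
    exact funext fun z => Polynomial.deriv _

theorem coef_eval (P : ℂ[X]) (k : ℕ) : coef (fun z => P.eval z) k = P.coeff k := by
  rw [coef, iteratedDeriv_eval]
  beta_reduce
  rw [← Polynomial.coeff_zero_eq_eval_zero,
    Polynomial.coeff_iterate_derivative, zero_add, Nat.descFactorial_self, nsmul_eq_mul]
  exact mul_div_cancel_left₀ _ (Nat.cast_ne_zero.2 k.factorial_ne_zero)

theorem holOn_eval (P : ℂ[X]) : HolOn fun z => P.eval z :=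
  holOn_iff_differentiableOn.2 P.differentiable.differentiableOn

def weightedPoly (α A : ℝ) (N : ℕ) : ℂ[X] :=
  ∑ k ∈ Finset.range N, Polynomial.monomial k ((A * ((k : ℝ) + 1) ^ (α - 1) : ℝ) : ℂ)

theorem norm_coef_weightedPoly {α A : ℝ} (hA : 0 ≤ A) (N k : ℕ) :
    ‖coef (fun z => (weightedPoly α A N).eval z) k‖ =
      if k < N then A * ((k : ℝ) + 1) ^ (α - 1) else 0 := by
  rw [coef_eval, weightedPoly, Polynomial.finsetSum_coeff]
  simp only [Polynomial.coeff_monomial, Finset.sum_ite_eq', Finset.mem_range]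
  split_ifs
  · rw [Complex.norm_real, Real.norm_of_nonneg (by positivity)]
  · exact norm_zero

theorem norm_eval_weightedPoly {α A r : ℝ} (hA : 0 ≤ A) (hr : 0 ≤ r) (N : ℕ) :
    ‖(weightedPoly α A N).eval (r : ℂ)‖ =
      A * ∑ k ∈ Finset.range N, ((k : ℝ) + 1) ^ (α - 1) * r ^ k := by
  have heval : (weightedPoly α A N).eval (r : ℂ) =
      ((A * ∑ k ∈ Finset.range N, ((k : ℝ) + 1) ^ (α - 1) * r ^ k : ℝ) : ℂ) := by
    simp [weightedPoly, Polynomial.eval_finsetSum, Finset.mul_sum, mul_assoc]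
  rw [heval, Complex.norm_real, Real.norm_of_nonneg (by positivity)]

theorem weightedPoly_mem_lpa_unitBall {p α : ℝ} (hp : 0 < p) {N : ℕ} (hN : 0 < N) :
    MemLpa p α (fun z => (weightedPoly α ((N : ℝ) ^ (-(1 / p))) N).eval z) ∧
      lpaNorm p α (fun z => (weightedPoly α ((N : ℝ) ^ (-(1 / p))) N).eval z) ≤ 1 := by
  have hN' : (0 : ℝ) < N := Nat.cast_pos.2 hN
  have hterm : ∀ k : ℕ, ‖coef (fun z => (weightedPoly α ((N : ℝ) ^ (-(1 / p))) N).eval z) k‖ ^ p /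
      ((k : ℝ) + 1) ^ (p * (α - 1)) = if k < N then (N : ℝ)⁻¹ else 0 := fun k => by
    rw [norm_coef_weightedPoly (by positivity)]
    split_ifs
    · rw [Real.mul_rpow (by positivity) (by positivity), ← Real.rpow_mul hN'.le,
        ← Real.rpow_mul (by positivity), mul_comm (α - 1), mul_div_assoc,
        div_self (by positivity), mul_one, neg_mul, one_div, inv_mul_cancel₀ hp.ne',
        Real.rpow_neg_one]
    · rw [Real.zero_rpow hp.ne', zero_div]
  have hsum : HasSum (fun k : ℕ => if k < N then (N : ℝ)⁻¹ else 0) 1 := by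
    have h : HasSum (fun k : ℕ => if k < N then (N : ℝ)⁻¹ else 0)
        (∑ k ∈ Finset.range N, if k < N then (N : ℝ)⁻¹ else 0) :=
      hasSum_sum_of_ne_finset_zero fun k hk => if_neg (by simpa using hk)
    rwa [Finset.sum_congr rfl fun k hk => if_pos (Finset.mem_range.1 hk), Finset.sum_const,
      Finset.card_range, nsmul_eq_mul, mul_inv_cancel₀ hN'.ne'] at h
  simp_rw [MemLpa, lpaNorm, hterm]
  exact ⟨⟨holOn_eval _, hsum.summable⟩, by rw [hsum.tsum_eq, Real.one_rpow]⟩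

theorem weightedPoly_mem_linfa_unitBall (α : ℝ) (N : ℕ) :
    MemLinfa α (fun z => (weightedPoly α 1 N).eval z) ∧
      linfaNorm α (fun z => (weightedPoly α 1 N).eval z) ≤ 1 := by
  have hterm : ∀ k : ℕ, ‖coef (fun z => (weightedPoly α 1 N).eval z) k‖ /
      ((k : ℝ) + 1) ^ (α - 1) ≤ 1 := fun k => by
    rw [norm_coef_weightedPoly zero_le_one, one_mul]
    split_ifs
    · exact (div_self (by positivity)).le
    · rw [zero_div]; exact zero_le_one
  exact ⟨⟨holOn_eval _, 1, Set.forall_mem_range.2 hterm⟩, ciSup_le hterm⟩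

theorem exp_neg_one_le_pow {r : ℝ} (hr0 : 0 ≤ r) {k : ℕ} (hk : (k : ℝ) * (1 - r) ≤ r) :
    Real.exp (-1) ≤ r ^ k := by
  rcases hr0.eq_or_lt with rfl | hr
  · obtain rfl : k = 0 := by simpa using hk
    simp
  · rw [← Real.exp_log hr, ← Real.exp_nat_mul]
    refine Real.exp_le_exp.2 ?_
    have hlog := Real.one_sub_inv_le_log_of_pos hr
    have hk' : (k : ℝ) * (1 - r) / r ≤ 1 := div_le_one_of_le₀ hk hr.le
    calc (-1 : ℝ) ≤ k * (1 - r⁻¹) := by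
          rw [show (k : ℝ) * (1 - r⁻¹) = -((k : ℝ) * (1 - r) / r) by field_simp; ring]
          linarith
      _ ≤ k * Real.log r := mul_le_mul_of_nonneg_left hlog k.cast_nonneg

theorem rpow_div_le_sum_rpow {s : ℝ} (hs : 0 ≤ s) (N : ℕ) :
    (N : ℝ) ^ (s + 1) / (s + 1) ≤ ∑ k ∈ Finset.range N, ((k : ℝ) + 1) ^ s := by
  have hmono : MonotoneOn (fun x : ℝ => x ^ s) (Set.Icc 0 (0 + N)) :=
    (Real.monotoneOn_rpow_Ici_of_exponent_nonneg hs).mono Set.Icc_subset_Ici_self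
  have h := hmono.integral_le_sum
  rw [zero_add, integral_rpow (Or.inl (by linarith)), Real.zero_rpow (by linarith), sub_zero] at h
  simpa [add_comm] using h

theorem exp_neg_one_mul_le_sum {α r : ℝ} (hα : 1 ≤ α) (hr0 : 0 ≤ r) (hr1 : r < 1) :
    Real.exp (-1) * ((⌊1 / (1 - r)⌋₊ : ℝ) ^ α / α) ≤
      ∑ k ∈ Finset.range ⌊1 / (1 - r)⌋₊, ((k : ℝ) + 1) ^ (α - 1) * r ^ k := by
  set N := ⌊1 / (1 - r)⌋₊
  have hpow : ∀ k ∈ Finset.range N, Real.exp (-1) ≤ r ^ k := fun k hk => by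
    have hkN : (k : ℝ) + 1 ≤ 1 / (1 - r) :=
      (by exact_mod_cast Finset.mem_range.1 hk : (k : ℝ) + 1 ≤ N).trans
        (Nat.floor_le (by rw [one_div]; exact inv_nonneg.2 (by linarith)))
    rw [le_div_iff₀ (by linarith)] at hkN
    exact exp_neg_one_le_pow hr0 (by linarith)
  have hsum := rpow_div_le_sum_rpow (s := α - 1) (by linarith) N
  rw [sub_add_cancel] at hsum
  calc Real.exp (-1) * ((N : ℝ) ^ α / α)
      ≤ ∑ k ∈ Finset.range N, ((k : ℝ) + 1) ^ (α - 1) * Real.exp (-1) := by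
        rw [← Finset.sum_mul, mul_comm]
        exact mul_le_mul_of_nonneg_right hsum (Real.exp_pos _).le
    _ ≤ _ := Finset.sum_le_sum fun k hk => mul_le_mul_of_nonneg_left (hpow k hk) (by positivity)

theorem le_norm_eval_weightedPoly {α t r : ℝ} (hα : 1 ≤ α) (ht0 : 0 ≤ t) (ht1 : t ≤ 1) (hr0 : 0 ≤ r)
    (hr1 : r < 1) :
    Real.exp (-1) / (α * 2 ^ α) * (1 / (1 - r)) ^ (α - t) ≤
      ‖(weightedPoly α ((⌊1 / (1 - r)⌋₊ : ℝ) ^ (-t)) ⌊1 / (1 - r)⌋₊).eval (r : ℂ)‖ := by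
  rw [norm_eval_weightedPoly (by positivity) hr0]
  set x := 1 / (1 - r)
  set N := ⌊x⌋₊
  have hx : 1 ≤ x := by rw [le_div_iff₀ (by linarith)]; linarith
  have hN : x / 2 ≤ N := by
    have h1 : (1 : ℝ) ≤ N := by exact_mod_cast Nat.le_floor (by exact_mod_cast hx)
    linarith [Nat.lt_floor_add_one x]
  have hN0 : (0 : ℝ) < N := by linarith
  have h2 : (2 : ℝ) ^ (α - t) ≤ 2 ^ α := Real.rpow_le_rpow_of_exponent_le one_le_two (by linarith)
  calc Real.exp (-1) / (α * 2 ^ α) * x ^ (α - t)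
      = Real.exp (-1) / α * (x ^ (α - t) / 2 ^ α) := by ring
    _ ≤ Real.exp (-1) / α * (x / 2) ^ (α - t) := by
        rw [Real.div_rpow (by linarith) zero_le_two]
        gcongr
    _ ≤ Real.exp (-1) / α * (N : ℝ) ^ (α - t) := by
        gcongr
        linarith
    _ = (N : ℝ) ^ (-t) * (Real.exp (-1) * ((N : ℝ) ^ α / α)) := by
        rw [sub_eq_neg_add, Real.rpow_add hN0]
        ring
    _ ≤ _ := mul_le_mul_of_nonneg_left (exp_neg_one_mul_le_sum hα hr0 hr1) (by positivity)

/-- Théorème 3 (1), lower bound: for `X = l^p_a(α)`, `α ≥ 1`, `1 ≤ p ≤ ∞`,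
`C_{n,r}(X, H^∞) ≥ c (1/(1-r))^{α - 1/p}` (case `p = ∞`, exponent `α`, stated
via the sup-norm space `l^∞_a(α)`). -/
theorem Cnr_lpa_Hinf_lower (α : ℝ) (hα : 1 ≤ α) :
    (∀ p : ℝ, 1 ≤ p →
      ∃ c : ℝ, 0 < c ∧ ∀ n : ℕ, 1 ≤ n → ∀ r : ℝ, 0 ≤ r → r < 1 →
        c * (1 / (1 - r)) ^ (α - 1 / p) ≤ CnrLpaHinf p α n r) ∧
    (∃ c : ℝ, 0 < c ∧ ∀ n : ℕ, 1 ≤ n → ∀ r : ℝ, 0 ≤ r → r < 1 →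
      c * (1 / (1 - r)) ^ α ≤ CnrLinfaHinf α n r) := by
  have hc : 0 < Real.exp (-1) / (α * 2 ^ α) := by
    have : 0 < α := by linarith
    positivity
  have hN : ∀ r : ℝ, 0 ≤ r → r < 1 → 0 < ⌊1 / (1 - r)⌋₊ := fun r hr0 hr1 =>
    Nat.floor_pos.2 (by rw [le_div_iff₀ (by linarith)]; linarith)
  refine ⟨fun p hp => ⟨_, hc, fun n hn r hr0 hr1 => ?_⟩, ⟨_, hc, fun n hn r hr0 hr1 => ?_⟩⟩
  · have hp0 : 0 < p := by linarith
    obtain ⟨hmem, hnorm⟩ := weightedPoly_mem_lpa_unitBall (α := α) hp0 (hN r hr0 hr1)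
    rw [cnrLpaHinf_eq]
    exact (le_norm_eval_weightedPoly hα (by positivity) ((div_le_one hp0).2 hp) hr0 hr1).trans
      (norm_le_worstInterpConst_of_norm_coef_le
        (fun f hf hf1 => ⟨hf.1, norm_coef_le_of_lpaNorm_le_one hp0 hf hf1⟩) hn hr0 hr1 hmem hnorm)
  · obtain ⟨hmem, hnorm⟩ := weightedPoly_mem_linfa_unitBall α ⌊1 / (1 - r)⌋₊
    have h := le_norm_eval_weightedPoly hα le_rfl zero_le_one hr0 hr1
    rw [sub_zero, neg_zero, Real.rpow_zero] at h
    rw [cnrLinfaHinf_eq]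
    exact h.trans (norm_le_worstInterpConst_of_norm_coef_le
      (fun f hf hf1 => ⟨hf.1, norm_coef_le_of_linfaNorm_le_one hf hf1⟩) hn hr0 hr1 hmem hnorm)
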